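/- arXiv:2509.20671 — 2 statements merged into one kernel-verified Lean document; each statement's English description precedes it below -/
import Mathlib

section
/- In a d-regular graph G on n vertices, the number of closed trails of length ℓ that contain at most k distinct vertices is at most n·d^{k-1}·k^{ℓ-1}, for any 1 ≤ k ≤ ℓ. -/
namespace CSTC

open List

variable {α : Type*} [DecidableEq α]

def step (acc : List α) (a : α) : List α := if a ∈ acc then acc else acc ++ [a]

def fo (l : List α) : List α := l.foldl step []

lemma prefix_step (acc : List α) (a : α) : acc <+: step acc a := by
  unfold step; split
  · exact List.prefix_refl _
  · exact List.prefix_append _ _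

lemma prefix_foldl (acc : List α) (l : List α) : acc <+: l.foldl step acc := by
  induction l generalizing acc with
  | nil => exact List.prefix_refl _
  | cons a l ih => exact (prefix_step acc a).trans (ih _)

lemma mem_step {b : α} (acc : List α) (a : α) : b ∈ step acc a ↔ b ∈ acc ∨ b = a := by
  unfold step; split <;> rename_i h
  · constructor
    · exact Or.inl
    · rintro (hb | rfl)
      · exact hb
      · exact h
  · simp

lemma mem_foldl (l : List α) (acc : List α) {b : α} :
    b ∈ l.foldl step acc ↔ b ∈ acc ∨ b ∈ l := by
  induction l generalizing acc with
  | nil => simp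
  | cons a l ih =>
    rw [List.foldl_cons, ih, mem_step]
    simp only [List.mem_cons]
    tauto

lemma mem_fo {l : List α} {b : α} : b ∈ fo l ↔ b ∈ l := by
  rw [fo, mem_foldl]; simp

lemma nodup_foldl (l : List α) (acc : List α) (h : acc.Nodup) : (l.foldl step acc).Nodup := by
  induction l generalizing acc with
  | nil => exact h
  | cons a l ih =>
    rw [List.foldl_cons]
    refine ih _ ?_
    unfold step; split
    · exact h
    · rename_i ha
      simp [List.nodup_append, h, ha]
      exact fun b hb hba => ha (hba ▸ hb)

lemma nodup_fo (l : List α) : (fo l).Nodup := nodup_foldl l [] List.nodup_nil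

lemma fo_append (l1 l2 : List α) : fo (l1 ++ l2) = l2.foldl step (fo l1) := by
  simp [fo, List.foldl_append]

lemma fo_prefix_fo (P S : List α) : fo P <+: fo (P ++ S) := by
  rw [fo_append]; exact prefix_foldl _ _

lemma indexOf_fo_of_mem {P : List α} (S : List α) {a : α} (h : a ∈ fo P) :
    List.idxOf a (fo (P ++ a :: S)) = List.idxOf a (fo P) := by
  obtain ⟨r, hr⟩ := fo_prefix_fo P (a :: S)
  rw [← hr, List.idxOf_append_of_mem h]

lemma fo_new_decomp {P : List α} (S : List α) {a : α} (h : a ∉ fo P) :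
    ∃ r, fo (P ++ a :: S) = (fo P ++ [a]) ++ r := by
  have h1 : fo (P ++ a :: S) = S.foldl step (fo P ++ [a]) := by
    rw [fo_append, List.foldl_cons]
    congr 1
    unfold step
    simp [h]
  obtain ⟨r, hr⟩ := prefix_foldl (fo P ++ [a]) S
  exact ⟨r, by rw [h1, ← hr]⟩

lemma indexOf_fo_of_not_mem {P : List α} (S : List α) {a : α} (h : a ∉ fo P) :
    List.idxOf a (fo (P ++ a :: S)) = (fo P).length := by
  obtain ⟨r, hr⟩ := fo_new_decomp S h
  rw [hr, List.idxOf_append_of_mem (by simp), List.idxOf_append_of_notMem h]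
  simp

lemma getD_fo_of_not_mem {P : List α} (S : List α) {a d : α} (h : a ∉ fo P) :
    (fo (P ++ a :: S)).getD (fo P).length d = a := by
  obtain ⟨r, hr⟩ := fo_new_decomp S h
  rw [hr, List.getD_append _ _ _ _ (by simp), List.getD_append_right _ _ _ _ le_rfl]
  simp

lemma length_fo_lt_of_not_mem {P : List α} (S : List α) {a : α} (h : a ∉ fo P) :
    (fo P).length < (fo (P ++ a :: S)).length := by
  obtain ⟨r, hr⟩ := fo_new_decomp S h
  rw [hr]
  simp only [List.length_append, List.length_cons]
  omega

def nbrs {n : ℕ} (G : SimpleGraph (Fin n)) [DecidableRel G.Adj] (w : Fin n) : List (Fin n) :=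
  (G.neighborFinset w).sort (· ≤ ·)

def gv {n : ℕ} (G : SimpleGraph (Fin n)) [DecidableRel G.Adj] (v : Fin n) (L : List (Fin n))
    (i : ℕ) : ℕ :=
  List.idxOf ((fo L).getD (i + 1) v)
    (nbrs G (L.getD (List.idxOf ((fo L).getD (i + 1) v) L - 1) v))

lemma length_nbrs {n d : ℕ} {G : SimpleGraph (Fin n)} [DecidableRel G.Adj]
    (hreg : G.IsRegularOfDegree d) (w : Fin n) : (nbrs G w).length = d := by
  rw [nbrs, Finset.length_sort]
  exact hreg w

lemma mem_nbrs {n : ℕ} {G : SimpleGraph (Fin n)} [DecidableRel G.Adj] {w u : Fin n} :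
    u ∈ nbrs G w ↔ G.Adj w u := by
  rw [nbrs, Finset.mem_sort, SimpleGraph.mem_neighborFinset]

lemma core {n k d : ℕ} {G : SimpleGraph (Fin n)} [DecidableRel G.Adj] {v : Fin n}
    (hreg : G.IsRegularOfDegree d)
    (L1 L2 : List (Fin n))
    (hlen : L1.length = L2.length)
    (hc1 : List.Chain' G.Adj L1) (hc2 : List.Chain' G.Adj L2)
    (hl1 : L1.getLast? = some v) (hl2 : L2.getLast? = some v)
    (hk1 : (fo L1).length ≤ k) (hk2 : (fo L2).length ≤ k)
    (hf : ∀ t, 1 ≤ t → t + 1 < L1.length →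
      min (List.idxOf (L1.getD t v) (fo L1)) (k - 1)
        = min (List.idxOf (L2.getD t v) (fo L2)) (k - 1))
    (hg : ∀ i, i < k - 1 → min (gv G v L1 i) (d - 1) = min (gv G v L2 i) (d - 1)) :
    ∀ (S1 S2 P : List (Fin n)), P ≠ [] → L1 = P ++ S1 → L2 = P ++ S2 → S1 = S2 := by
  intro S1
  induction S1 with
  | nil =>
    intro S2 P hP h1 h2
    have hlen2 : S2.length = 0 := by
      have h := hlen
      rw [h1, h2] at h
      simp only [List.length_append, List.length_nil] at h
      omega
    exact (List.length_eq_zero_iff.mp hlen2).symm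
  | cons a1 T1 ih =>
    intro S2 P hP h1 h2
    cases S2 with
    | nil =>
      exfalso
      have h := hlen
      rw [h1, h2] at h
      simp only [List.length_append, List.length_nil, List.length_cons] at h
      omega
    | cons a2 T2 =>
      have hPl : 1 ≤ P.length := List.length_pos_iff.mpr hP
      have hL1len : P.length < L1.length := by
        rw [h1]; simp only [List.length_append, List.length_cons]; omega
      have ha : a1 = a2 := by
        by_cases hend : P.length + 1 = L1.length
        · -- last position: both are v
          have hT1 : T1 = [] := by
            have h := congrArg List.length h1
            simp only [List.length_append, List.length_cons] at h
            rw [List.length_eq_zero_iff.symm] at *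
            omega
          have hT2 : T2 = [] := by
            have h := congrArg List.length h2
            rw [← hlen] at h
            simp only [List.length_append, List.length_cons] at h
            rw [List.length_eq_zero_iff.symm] at *
            omega
          subst hT1; subst hT2
          have e1 : some a1 = some v := by
            rw [← hl1, h1, List.getLast?_concat]
          have e2 : some a2 = some v := by
            rw [← hl2, h2, List.getLast?_concat]
          rw [Option.some.injEq] at e1 e2
          rw [e1, e2]
        · -- interior position
          have hlt : P.length + 1 < L1.length := by omega
          have hgetD1 : L1.getD P.length v = a1 := by
            rw [h1, List.getD_append_right _ _ _ _ le_rfl]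
            simp
          have hgetD2 : L2.getD P.length v = a2 := by
            rw [h2, List.getD_append_right _ _ _ _ le_rfl]
            simp
          have hmin := hf P.length hPl hlt
          rw [hgetD1, hgetD2] at hmin
          have hfoP_le1 : (fo P).length ≤ (fo L1).length := by
            rw [h1]; exact (fo_prefix_fo P _).length_le
          by_cases m1 : a1 ∈ fo P <;> by_cases m2 : a2 ∈ fo P
          · -- both old
            have i1 : List.idxOf a1 (fo L1) = List.idxOf a1 (fo P) := by
              rw [h1]; exact indexOf_fo_of_mem _ m1
            have i2 : List.idxOf a2 (fo L2) = List.idxOf a2 (fo P) := by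
              rw [h2]; exact indexOf_fo_of_mem _ m2
            have b1 : List.idxOf a1 (fo P) < (fo P).length := List.idxOf_lt_length_iff.mpr m1
            have b2 : List.idxOf a2 (fo P) < (fo P).length := List.idxOf_lt_length_iff.mpr m2
            rw [i1, i2] at hmin
            have : List.idxOf a1 (fo P) = List.idxOf a2 (fo P) := by omega
            exact (List.idxOf_inj m1).mp this
          · -- a1 old, a2 new: contradiction
            exfalso
            have i1 : List.idxOf a1 (fo L1) = List.idxOf a1 (fo P) := by
              rw [h1]; exact indexOf_fo_of_mem _ m1
            have i2 : List.idxOf a2 (fo L2) = (fo P).length := by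
              rw [h2]; exact indexOf_fo_of_not_mem _ m2
            have b1 : List.idxOf a1 (fo P) < (fo P).length := List.idxOf_lt_length_iff.mpr m1
            have hst : (fo P).length < (fo L2).length := by
              rw [h2]; exact length_fo_lt_of_not_mem _ m2
            rw [i1, i2] at hmin
            omega
          · -- a1 new, a2 old: contradiction
            exfalso
            have i1 : List.idxOf a1 (fo L1) = (fo P).length := by
              rw [h1]; exact indexOf_fo_of_not_mem _ m1
            have i2 : List.idxOf a2 (fo L2) = List.idxOf a2 (fo P) := by
              rw [h2]; exact indexOf_fo_of_mem _ m2
            have b2 : List.idxOf a2 (fo P) < (fo P).length := List.idxOf_lt_length_iff.mpr m2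
            have hst : (fo P).length < (fo L1).length := by
              rw [h1]; exact length_fo_lt_of_not_mem _ m1
            rw [i1, i2] at hmin
            omega
          · -- both new: use the g-code
            set m := (fo P).length with hm
            have hm1 : 1 ≤ m := by
              rcases P with _ | ⟨p0, P'⟩
              · exact absurd rfl hP
              · have : p0 ∈ fo (p0 :: P') := mem_fo.mpr List.mem_cons_self
                have := List.length_pos_iff.mpr (List.ne_nil_of_mem this)
                omega
            have hst1 : m < (fo L1).length := by
              rw [h1]; exact length_fo_lt_of_not_mem _ m1
            have hst2 : m < (fo L2).length := by
              rw [h2]; exact length_fo_lt_of_not_mem _ m2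
            have hmk : m < k := by omega
            -- the common predecessor
            set w := P.getD (P.length - 1) v with hw
            have prev1 : L1.getD (P.length - 1) v = w := by
              rw [h1, List.getD_append _ _ _ _ (by omega)]
            have prev2 : L2.getD (P.length - 1) v = w := by
              rw [h2, List.getD_append _ _ _ _ (by omega)]
            have e1 : (fo L1).getD (m - 1 + 1) v = a1 := by
              rw [Nat.sub_add_cancel hm1, hm, h1]
              exact getD_fo_of_not_mem _ m1
            have e2 : (fo L2).getD (m - 1 + 1) v = a2 := by
              rw [Nat.sub_add_cancel hm1, hm, h2]
              exact getD_fo_of_not_mem _ m2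
            have idx1 : List.idxOf a1 L1 = P.length := by
              rw [h1, List.idxOf_append_of_notMem (fun hmem => m1 (mem_fo.mpr hmem)),
                List.idxOf_cons_self]
              omega
            have idx2 : List.idxOf a2 L2 = P.length := by
              rw [h2, List.idxOf_append_of_notMem (fun hmem => m2 (mem_fo.mpr hmem)),
                List.idxOf_cons_self]
              omega
            have g1 : gv G v L1 (m - 1) = List.idxOf a1 (nbrs G w) := by
              rw [gv, e1, idx1, prev1]
            have g2 : gv G v L2 (m - 1) = List.idxOf a2 (nbrs G w) := by
              rw [gv, e2, idx2, prev2]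
            -- adjacency
            have hadj1 : G.Adj w a1 := by
              have hch := List.isChain_iff_getElem.mp hc1 (P.length - 1) (by omega)
              have hadj : G.Adj (L1.getD (P.length - 1) v) (L1.getD (P.length - 1 + 1) v) := by
                rw [List.getD_eq_getElem L1 v (n := P.length - 1) (by omega),
                  List.getD_eq_getElem L1 v (n := P.length - 1 + 1) (by omega)]
                simpa using hch
              rw [Nat.sub_add_cancel hPl, prev1, hgetD1] at hadj
              exact hadj
            have hadj2 : G.Adj w a2 := by
              have hch := List.isChain_iff_getElem.mp hc2 (P.length - 1) (by omega)
              have hadj : G.Adj (L2.getD (P.length - 1) v) (L2.getD (P.length - 1 + 1) v) := by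
                rw [List.getD_eq_getElem L2 v (n := P.length - 1) (by omega),
                  List.getD_eq_getElem L2 v (n := P.length - 1 + 1) (by omega)]
                simpa using hch
              rw [Nat.sub_add_cancel hPl, prev2, hgetD2] at hadj
              exact hadj
            have mem1 : a1 ∈ nbrs G w := mem_nbrs.mpr hadj1
            have mem2 : a2 ∈ nbrs G w := mem_nbrs.mpr hadj2
            have bd1 : List.idxOf a1 (nbrs G w) < d := by
              have := List.idxOf_lt_length_iff.mpr mem1
              rwa [length_nbrs hreg] at this
            have bd2 : List.idxOf a2 (nbrs G w) < d := by
              have := List.idxOf_lt_length_iff.mpr mem2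
              rwa [length_nbrs hreg] at this
            have hgm := hg (m - 1) (by omega)
            rw [g1, g2] at hgm
            have : List.idxOf a1 (nbrs G w) = List.idxOf a2 (nbrs G w) := by omega
            exact (List.idxOf_inj mem1).mp this
      subst ha
      have := ih T2 (P ++ [a1]) (by simp) (by rw [h1]; simp) (by rw [h2]; simp)
      rw [this]

theorem walk_support_inj {V : Type*} {G : SimpleGraph V} {u w : V} (p : G.Walk u w) :
    ∀ (q : G.Walk u w), p.support = q.support → p = q := by
  induction p with
  | nil =>
    intro q h
    cases q with
    | nil => rfl
    | cons h' q' =>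
      exfalso
      simp only [SimpleGraph.Walk.support_nil, SimpleGraph.Walk.support_cons,
        List.cons.injEq, true_and] at h
      exact q'.support_ne_nil h.symm
  | cons h' p' ih =>
    intro q h
    cases q with
    | nil =>
      exfalso
      simp only [SimpleGraph.Walk.support_nil, SimpleGraph.Walk.support_cons,
        List.cons.injEq, true_and] at h
      exact p'.support_ne_nil h
    | cons h'' q' =>
      simp only [SimpleGraph.Walk.support_cons, List.cons.injEq, true_and] at h
      have hbc := congrArg List.head? h
      rw [SimpleGraph.Walk.support_eq_cons p', SimpleGraph.Walk.support_eq_cons q'] at hbc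
      simp only [List.head?_cons] at hbc
      obtain rfl := Option.some.inj hbc
      rw [ih q' h]

end CSTC



/-- In a `d`-regular graph on `n` vertices, the number of rooted directed closed trails
of length `ℓ` containing at most `k` distinct vertices is at most `n·d^(k-1)·k^(ℓ-1)`,
for `1 ≤ k ≤ ℓ`. -/
theorem card_short_closed_trails_le (n d k ℓ : ℕ) (G : SimpleGraph (Fin n))
    [DecidableRel G.Adj] (hreg : G.IsRegularOfDegree d) (hk : 1 ≤ k) (hkl : k ≤ ℓ) :
    Nat.card {p : (v : Fin n) × G.Walk v v //
        p.2.length = ℓ ∧ p.2.IsTrail ∧ p.2.support.toFinset.card ≤ k} ≤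
      n * d ^ (k - 1) * k ^ (ℓ - 1) := by
  classical
  rcases isEmpty_or_nonempty {p : (v : Fin n) × G.Walk v v //
      p.2.length = ℓ ∧ p.2.IsTrail ∧ p.2.support.toFinset.card ≤ k} with hE | hNE
  · rw [Nat.card_of_isEmpty]
    exact Nat.zero_le _
  · obtain ⟨⟨⟨v0, p0⟩, hl0, -, -⟩⟩ := hNE
    have hd : 1 ≤ d := by
      cases p0 with
      | nil => simp at hl0; omega
      | cons hadj q =>
        have h1 : 0 < G.degree v0 := (SimpleGraph.degree_pos_iff_exists_adj G v0).mpr ⟨_, hadj⟩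
        rwa [hreg v0] at h1
    have key : Nat.card {p : (v : Fin n) × G.Walk v v //
        p.2.length = ℓ ∧ p.2.IsTrail ∧ p.2.support.toFinset.card ≤ k}
        ≤ Nat.card (Fin n × (Fin (ℓ - 1) → Fin k) × (Fin (k - 1) → Fin d)) := by
      apply Nat.card_le_card_of_injective
        (fun x => (x.1.1,
          fun t => (⟨min (List.idxOf (x.1.2.support.getD (t.1 + 1) x.1.1)
            (CSTC.fo x.1.2.support)) (k - 1), by omega⟩ : Fin k),
          fun i => (⟨min (CSTC.gv G x.1.1 x.1.2.support i.1) (d - 1), by omega⟩ : Fin d)))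
      rintro ⟨⟨v, p⟩, hp1, hp2, hp3⟩ ⟨⟨w, q⟩, hq1, hq2, hq3⟩ hxy
      simp only [Prod.mk.injEq] at hxy
      obtain ⟨rfl, h2, h3⟩ := hxy
      have hp3' : p.support.toFinset.card ≤ k := hp3
      have hq3' : q.support.toFinset.card ≤ k := hq3
      have hL1 : p.support.length = ℓ + 1 := by rw [SimpleGraph.Walk.length_support, hp1]
      have hL2 : q.support.length = ℓ + 1 := by rw [SimpleGraph.Walk.length_support, hq1]
      have hfo1 : (CSTC.fo p.support).length ≤ k := by
        have h1 : (CSTC.fo p.support).toFinset = p.support.toFinset := by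
          ext b; simp [List.mem_toFinset, CSTC.mem_fo]
        have hcard := List.toFinset_card_of_nodup (CSTC.nodup_fo p.support)
        rw [h1] at hcard
        omega
      have hfo2 : (CSTC.fo q.support).length ≤ k := by
        have h1 : (CSTC.fo q.support).toFinset = q.support.toFinset := by
          ext b; simp [List.mem_toFinset, CSTC.mem_fo]
        have hcard := List.toFinset_card_of_nodup (CSTC.nodup_fo q.support)
        rw [h1] at hcard
        omega
      have hlast1 : p.support.getLast? = some v := by
        rw [List.getLast?_eq_getLast_of_ne_nil p.support_ne_nil]
        exact congrArg some (SimpleGraph.Walk.getLast_support p)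
      have hlast2 : q.support.getLast? = some v := by
        rw [List.getLast?_eq_getLast_of_ne_nil q.support_ne_nil]
        exact congrArg some (SimpleGraph.Walk.getLast_support q)
      have hf : ∀ t, 1 ≤ t → t + 1 < p.support.length →
          min (List.idxOf (p.support.getD t v) (CSTC.fo p.support)) (k - 1)
            = min (List.idxOf (q.support.getD t v) (CSTC.fo q.support)) (k - 1) := by
        intro t ht1 ht2
        have ht : t - 1 < ℓ - 1 := by omega
        have hval := congrArg Fin.val (congrFun h2 ⟨t - 1, ht⟩)
        simp only at hval
        rwa [Nat.sub_add_cancel ht1] at hval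
      have hg : ∀ i, i < k - 1 →
          min (CSTC.gv G v p.support i) (d - 1) = min (CSTC.gv G v q.support i) (d - 1) := by
        intro i hi
        have hval := congrArg Fin.val (congrFun h3 ⟨i, hi⟩)
        simpa using hval
      have htails := CSTC.core hreg p.support q.support (by omega) p.isChain_adj_support
        q.isChain_adj_support hlast1 hlast2 hfo1 hfo2 hf hg
        p.support.tail q.support.tail [v] (by simp)
        (by simpa using p.support_eq_cons) (by simpa using q.support_eq_cons)
      have hsupp : p.support = q.support := by
        rw [SimpleGraph.Walk.support_eq_cons p, SimpleGraph.Walk.support_eq_cons q, htails]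
      have hpq : p = q := CSTC.walk_support_inj p q hsupp
      subst hpq
      rfl
    refine key.trans (le_of_eq ?_)
    simp only [Nat.card_prod, Nat.card_fun, Nat.card_eq_fintype_card, Fintype.card_fin,
      Fintype.card_prod, Fintype.card_fun]
    ring
end

section
/- For a uniform random pairing at a single vertex of degree d (d even) combining d/2 given trails, the number of resulting closed trails through that vertex is distributed as the number of cycles of the composition of two independent uniform fixed-point-free involutions on d letters, which equals in distribution the sum of independent Bernoulli random variables with parameters 1/(2j-1), j = 1, ..., d/2. In particular its expectation is ∑_{j=1}^{d/2} 1/(2j-1). -/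
/-- The fixed-point-free involutions on `d` letters. -/
def FPFInvolution (d : ℕ) : Type :=
  {σ : Equiv.Perm (Fin d) // σ * σ = 1 ∧ ∀ x, σ x ≠ x}

/-- The number of closed trails obtained by combining trails via a pairing at a vertex:
the number of orbits on the `d` letters of the group generated by the two
fixed-point-free involutions. -/
noncomputable def orbCount {d : ℕ} (σ τ : Equiv.Perm (Fin d)) : ℕ :=
  Nat.card (MulAction.orbitRel.Quotient
    (Subgroup.closure ({σ, τ} : Set (Equiv.Perm (Fin d)))) (Fin d))

open Equiv Relation
namespace OrbAux


variable {α β : Type*}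

def stepRel (σ τ : Equiv.Perm α) (x y : α) : Prop := σ x = y ∨ τ x = y

lemma stepRel_symm {σ τ : Equiv.Perm α} (hσ : σ * σ = 1) (hτ : τ * τ = 1) {x y : α}
    (h : stepRel σ τ x y) : stepRel σ τ y x := by
  rcases h with h | h
  · exact Or.inl (by rw [← h, ← Equiv.Perm.mul_apply, hσ]; rfl)
  · exact Or.inr (by rw [← h, ← Equiv.Perm.mul_apply, hτ]; rfl)

lemma eqvGen_of_mem_closure {σ τ : Equiv.Perm α} {g : Equiv.Perm α}
    (hg : g ∈ Subgroup.closure ({σ, τ} : Set (Equiv.Perm α))) :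
    ∀ y, EqvGen (stepRel σ τ) (g y) y := by
  induction hg using Subgroup.closure_induction with
  | mem x hx =>
    intro y
    rcases hx with rfl | rfl
    · exact EqvGen.symm _ _ (EqvGen.rel _ _ (Or.inl rfl))
    · exact EqvGen.symm _ _ (EqvGen.rel _ _ (Or.inr rfl))
  | one => intro y; exact EqvGen.refl y
  | mul x y hx hy ihx ihy =>
    intro z
    exact EqvGen.trans _ _ _ (ihx (y z)) (ihy z)
  | inv x hx ih =>
    intro y
    have := ih (x⁻¹ y)
    simp only [Equiv.Perm.inv_def, Equiv.apply_symm_apply] at this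
    exact EqvGen.symm _ _ this

lemma orbitRel_iff_eqvGen (σ τ : Equiv.Perm α) (x y : α) :
    (MulAction.orbitRel (Subgroup.closure ({σ, τ} : Set (Equiv.Perm α))) α) x y ↔
      EqvGen (stepRel σ τ) x y := by
  constructor
  · rintro ⟨g, rfl⟩
    exact eqvGen_of_mem_closure g.2 _
  · intro h
    induction h with
    | rel a b hab =>
      rcases hab with h | h
      · refine ⟨⟨σ, Subgroup.subset_closure (by simp)⟩⁻¹, ?_⟩
        show σ⁻¹ b = a
        rw [← h]; simp
      · refine ⟨⟨τ, Subgroup.subset_closure (by simp)⟩⁻¹, ?_⟩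
        show τ⁻¹ b = a
        rw [← h]; simp
    | refl a => exact ⟨1, by simp⟩
    | symm a b _ ih =>
      obtain ⟨g, hg⟩ := ih
      refine ⟨g⁻¹, ?_⟩
      show g⁻¹ • a = b
      rw [← hg]
      show g⁻¹ • (g • b) = b
      simp
    | trans a b c _ _ ih1 ih2 =>
      obtain ⟨g, hg⟩ := ih1
      obtain ⟨g', hg'⟩ := ih2
      refine ⟨g * g', ?_⟩
      show (g * g') • c = a
      rw [mul_smul]
      show g • ((fun m => m • c) g') = a
      rw [hg']; exact hg



noncomputable def orbCount' (σ τ : Equiv.Perm α) : ℕ :=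
  Nat.card (Quotient (EqvGen.setoid (stepRel σ τ)))

lemma orbCount_eq (σ τ : Equiv.Perm α) :
    Nat.card (MulAction.orbitRel.Quotient
      (Subgroup.closure ({σ, τ} : Set (Equiv.Perm α))) α) = orbCount' σ τ := by
  apply Nat.card_congr
  exact Quotient.congrRight (orbitRel_iff_eqvGen σ τ)

lemma eqvGen_lift {R : α → α → Prop} {S : β → β → Prop} (f : α → β)
    (h : ∀ x y, R x y → EqvGen S (f x) (f y)) :
    ∀ x y, EqvGen R x y → EqvGen S (f x) (f y) := by
  intro x y hxy
  induction hxy with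
  | rel a b hab => exact h _ _ hab
  | refl a => exact EqvGen.refl _
  | symm a b _ ih => exact EqvGen.symm _ _ ih
  | trans a b c _ _ ih1 ih2 => exact EqvGen.trans _ _ _ ih1 ih2

noncomputable def quotEquiv {R : α → α → Prop} {S : β → β → Prop} (f : α → β) (g : β → α)
    (hf : ∀ x y, R x y → EqvGen S (f x) (f y))
    (hg : ∀ x y, S x y → EqvGen R (g x) (g y))
    (hgf : ∀ x, EqvGen R (g (f x)) x)
    (hfg : ∀ y, EqvGen S (f (g y)) y) :
    Quotient (EqvGen.setoid R) ≃ Quotient (EqvGen.setoid S) where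
  toFun := Quotient.lift (fun x => Quotient.mk (EqvGen.setoid S) (f x))
    (fun a b h => Quotient.sound (eqvGen_lift f hf a b h))
  invFun := Quotient.lift (fun y => Quotient.mk (EqvGen.setoid R) (g y))
    (fun a b h => Quotient.sound (eqvGen_lift g hg a b h))
  left_inv := by
    refine Quotient.ind (fun x => ?_)
    exact Quotient.sound (hgf x)
  right_inv := by
    refine Quotient.ind (fun y => ?_)
    exact Quotient.sound (hfg y)


variable {m : ℕ}

def s0f (d : ℕ) (hd : Even d) : Fin d → Fin d := fun x =>
  if h : x.1 % 2 = 0 then ⟨x.1 + 1, by obtain ⟨n, rfl⟩ := hd; omega⟩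
  else ⟨x.1 - 1, by omega⟩

lemma s0f_val (d : ℕ) (hd : Even d) (x : Fin d) :
    (s0f d hd x).1 = if x.1 % 2 = 0 then x.1 + 1 else x.1 - 1 := by
  unfold s0f
  split_ifs <;> rfl

lemma s0f_inv (d : ℕ) (hd : Even d) : Function.Involutive (s0f d hd) := by
  intro x
  apply Fin.ext
  rw [s0f_val, s0f_val]
  rcases x with ⟨v, hv⟩
  simp only []
  split_ifs <;> omega

/-- the standard pairing `2k ↔ 2k+1` -/
def sigma0 (d : ℕ) (hd : Even d) : Equiv.Perm (Fin d) :=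
  Function.Involutive.toPerm _ (s0f_inv d hd)

lemma sigma0_apply (d : ℕ) (hd : Even d) (x : Fin d) :
    (sigma0 d hd x).1 = if x.1 % 2 = 0 then x.1 + 1 else x.1 - 1 := by
  simp only [sigma0, Function.Involutive.coe_toPerm]
  exact s0f_val d hd x

lemma sigma0_sq (d : ℕ) (hd : Even d) : sigma0 d hd * sigma0 d hd = 1 := by
  apply Equiv.ext
  intro x
  simp only [Equiv.Perm.mul_apply, Equiv.Perm.one_apply, sigma0,
    Function.Involutive.coe_toPerm]
  exact s0f_inv d hd x

lemma sigma0_fpf (d : ℕ) (hd : Even d) : ∀ x, sigma0 d hd x ≠ x := by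
  intro x h
  have := congrArg Fin.val h
  rw [sigma0_apply] at this
  split_ifs at this <;> omega

def i0 : Fin (m+2) := ⟨m, by omega⟩
def i1 : Fin (m+2) := ⟨m+1, by omega⟩
def inc (j : Fin m) : Fin (m+2) := ⟨j.1, by omega⟩

lemma val_inc (j : Fin m) : (inc j : Fin (m+2)).1 = j.1 := rfl
lemma val_i0 : (i0 : Fin (m+2)).1 = m := rfl
lemma val_i1 : (i1 : Fin (m+2)).1 = m + 1 := rfl
lemma inc_lt (j : Fin m) : (inc j : Fin (m+2)).1 < m := j.2

lemma inc_ne_i0 (j : Fin m) : inc j ≠ i0 := by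
  intro h
  have := congrArg Fin.val h
  rw [val_inc, val_i0] at this
  have := j.2
  omega

lemma inc_ne_i1 (j : Fin m) : inc j ≠ i1 := by
  intro h
  have := congrArg Fin.val h
  rw [val_inc, val_i1] at this
  have := j.2
  omega

lemma i0_ne_i1 : (i0 : Fin (m+2)) ≠ i1 := by
  intro h
  have := congrArg Fin.val h
  rw [val_i0, val_i1] at this
  omega

lemma inc_inj {j k : Fin m} (h : inc j = inc k) : j = k := by
  have h2 : (inc j : Fin (m+2)).1 = (inc k : Fin (m+2)).1 := congrArg Fin.val h
  exact Fin.ext h2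

lemma fin_cases3 (x : Fin (m+2)) : (∃ j : Fin m, x = inc j) ∨ x = i0 ∨ x = i1 := by
  rcases x with ⟨v, hv⟩
  by_cases h : v < m
  · exact Or.inl ⟨⟨v, h⟩, rfl⟩
  · by_cases h2 : v = m
    · exact Or.inr (Or.inl (by apply Fin.ext; rw [val_i0]; exact h2))
    · exact Or.inr (Or.inr (by apply Fin.ext; rw [val_i1]; show v = m + 1; omega))

lemma even_m2 (hm : Even m) : Even (m+2) := hm.add even_two

lemma sigma0_compat (hm : Even m) (j : Fin m) :
    sigma0 (m+2) (even_m2 hm) (inc j) = inc (sigma0 m hm j) := by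
  apply Fin.ext
  rw [sigma0_apply, val_inc, val_inc, sigma0_apply]

lemma sigma0_i0 (hm : Even m) : sigma0 (m+2) (even_m2 hm) i0 = i1 := by
  apply Fin.ext
  rw [sigma0_apply, val_i0, val_i1]
  obtain ⟨n, rfl⟩ := hm
  simp; omega

lemma sigma0_i1 (hm : Even m) : sigma0 (m+2) (even_m2 hm) i1 = i0 := by
  apply Fin.ext
  rw [sigma0_apply, val_i1, val_i0]
  obtain ⟨n, rfl⟩ := hm
  simp; omega

/-! extension maps -/

def extL (τ' : Equiv.Perm (Fin m)) (x : Fin (m+2)) : Fin (m+2) :=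
  if h : x.1 < m then inc (τ' ⟨x.1, h⟩) else if x.1 = m then i1 else i0

lemma extL_inc (τ' : Equiv.Perm (Fin m)) (j : Fin m) : extL τ' (inc j) = inc (τ' j) := by
  unfold extL
  rw [dif_pos (inc_lt j)]
  rfl

lemma extL_i0 (τ' : Equiv.Perm (Fin m)) : extL τ' (i0 : Fin (m+2)) = i1 := by
  unfold extL
  rw [dif_neg (by rw [val_i0]; omega), if_pos val_i0]

lemma extL_i1 (τ' : Equiv.Perm (Fin m)) : extL τ' (i1 : Fin (m+2)) = i0 := by
  unfold extL
  rw [dif_neg (by rw [val_i1]; omega), if_neg (by rw [val_i1]; omega)]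

def extR (a : Fin m) (τ' : Equiv.Perm (Fin m)) (x : Fin (m+2)) : Fin (m+2) :=
  if h : x.1 < m then
    (if (⟨x.1, h⟩ : Fin m) = a then i0 else if (⟨x.1, h⟩ : Fin m) = τ' a then i1
     else inc (τ' ⟨x.1, h⟩))
  else if x.1 = m then inc a else inc (τ' a)

lemma mk_val_inc (j : Fin m) (h : (inc j : Fin (m+2)).1 < m) : (⟨(inc j : Fin (m+2)).1, h⟩ : Fin m) = j := rfl

lemma extR_a (a : Fin m) (τ' : Equiv.Perm (Fin m)) : extR a τ' (inc a) = i0 := by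
  unfold extR
  rw [dif_pos (inc_lt a), mk_val_inc, if_pos rfl]

lemma extR_b (a : Fin m) (τ' : Equiv.Perm (Fin m)) (hfpf : τ' a ≠ a) :
    extR a τ' (inc (τ' a)) = i1 := by
  unfold extR
  rw [dif_pos (inc_lt (τ' a)), mk_val_inc, if_neg hfpf, if_pos rfl]

lemma extR_inc (a : Fin m) (τ' : Equiv.Perm (Fin m)) (j : Fin m) (h1 : j ≠ a)
    (h2 : j ≠ τ' a) : extR a τ' (inc j) = inc (τ' j) := by
  unfold extR
  rw [dif_pos (inc_lt j), mk_val_inc, if_neg h1, if_neg h2]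

lemma extR_i0 (a : Fin m) (τ' : Equiv.Perm (Fin m)) : extR a τ' (i0 : Fin (m+2)) = inc a := by
  unfold extR
  rw [dif_neg (by rw [val_i0]; omega), if_pos val_i0]

lemma extR_i1 (a : Fin m) (τ' : Equiv.Perm (Fin m)) : extR a τ' (i1 : Fin (m+2)) = inc (τ' a) := by
  unfold extR
  rw [dif_neg (by rw [val_i1]; omega), if_neg (by rw [val_i1]; omega)]



-- ===================== chunk 4: the bijection =====================

lemma sq_iff {α : Type*} (σ : Equiv.Perm α) : σ * σ = 1 ↔ ∀ x, σ (σ x) = x := by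
  constructor
  · intro h x
    have := congrArg (fun π : Equiv.Perm α => π x) h
    simpa using this
  · intro h
    apply Equiv.ext
    intro x
    simpa using h x

lemma val_lt_of_ne (x : Fin (m+2)) (h0 : x ≠ i0) (h1 : x ≠ i1) : x.1 < m := by
  have hv := x.2
  have e0 : x.1 ≠ m := fun h => h0 (Fin.ext h)
  have e1 : x.1 ≠ m + 1 := fun h => h1 (Fin.ext h)
  omega

lemma extL_inv (τ' : Equiv.Perm (Fin m)) (hi : ∀ j, τ' (τ' j) = j) :
    Function.Involutive (extL τ') := by
  intro x
  rcases fin_cases3 x with ⟨j, rfl⟩ | rfl | rfl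
  · rw [extL_inc, extL_inc, hi]
  · rw [extL_i0, extL_i1]
  · rw [extL_i1, extL_i0]

lemma extL_fpf (τ' : Equiv.Perm (Fin m)) (hf : ∀ j, τ' j ≠ j) : ∀ x, extL τ' x ≠ x := by
  intro x
  rcases fin_cases3 x with ⟨j, rfl⟩ | rfl | rfl
  · rw [extL_inc]; exact fun h => hf j (inc_inj h)
  · rw [extL_i0]; exact (Ne.symm i0_ne_i1)
  · rw [extL_i1]; exact i0_ne_i1

lemma tau_ne_a (τ' : Equiv.Perm (Fin m)) (hi : ∀ j, τ' (τ' j) = j) (a j : Fin m)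
    (hj : j ≠ τ' a) : τ' j ≠ a := by
  intro h
  apply hj
  rw [← h, hi]

lemma tau_ne_b (τ' : Equiv.Perm (Fin m)) (a j : Fin m) (hj : j ≠ a) : τ' j ≠ τ' a := by
  intro h
  exact hj (τ'.injective h)

lemma extR_inv (τ' : Equiv.Perm (Fin m)) (hi : ∀ j, τ' (τ' j) = j) (hf : ∀ j, τ' j ≠ j)
    (a : Fin m) : Function.Involutive (extR a τ') := by
  intro x
  rcases fin_cases3 x with ⟨j, rfl⟩ | rfl | rfl
  · by_cases h1 : j = a
    · subst h1
      rw [extR_a, extR_i0]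
    · by_cases h2 : j = τ' a
      · subst h2
        rw [extR_b a τ' (hf a), extR_i1]
      · rw [extR_inc a τ' j h1 h2,
          extR_inc a τ' (τ' j) (tau_ne_a τ' hi a j h2) (tau_ne_b τ' a j h1), hi]
  · rw [extR_i0, extR_a]
  · rw [extR_i1, extR_b a τ' (hf a)]

lemma extR_fpf (τ' : Equiv.Perm (Fin m)) (hf : ∀ j, τ' j ≠ j) (a : Fin m) :
    ∀ x, extR a τ' x ≠ x := by
  intro x
  rcases fin_cases3 x with ⟨j, rfl⟩ | rfl | rfl
  · by_cases h1 : j = a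
    · subst h1; rw [extR_a]; exact (Ne.symm (inc_ne_i0 _))
    · by_cases h2 : j = τ' a
      · subst h2; rw [extR_b a τ' (hf a)]; exact (Ne.symm (inc_ne_i1 _))
      · rw [extR_inc a τ' j h1 h2]; exact fun h => hf j (inc_inj h)
  · rw [extR_i0]; exact inc_ne_i0 a
  · rw [extR_i1]; exact inc_ne_i1 _

/-- apply a FPF involution twice -/
lemma fpf_app {d : ℕ} (τ : FPFInvolution d) (x : Fin d) : τ.1 (τ.1 x) = x :=
  (sq_iff τ.1).1 τ.2.1 x

def PsiL (τ' : FPFInvolution m) : FPFInvolution (m+2) :=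
  ⟨Function.Involutive.toPerm _ (extL_inv τ'.1 (fpf_app τ')),
   (sq_iff _).2 (fun x => by
      simp only [Function.Involutive.coe_toPerm]
      exact extL_inv τ'.1 (fpf_app τ') x),
   fun x => by
      simp only [Function.Involutive.coe_toPerm]
      exact extL_fpf τ'.1 τ'.2.2 x⟩

def PsiR (a : Fin m) (τ' : FPFInvolution m) : FPFInvolution (m+2) :=
  ⟨Function.Involutive.toPerm _ (extR_inv τ'.1 (fpf_app τ') τ'.2.2 a),
   (sq_iff _).2 (fun x => by
      simp only [Function.Involutive.coe_toPerm]
      exact extR_inv τ'.1 (fpf_app τ') τ'.2.2 a x),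
   fun x => by
      simp only [Function.Involutive.coe_toPerm]
      exact extR_fpf τ'.1 τ'.2.2 a x⟩

lemma PsiL_apply (τ' : FPFInvolution m) (x : Fin (m+2)) : (PsiL τ').1 x = extL τ'.1 x := by
  show (Function.Involutive.toPerm _ (extL_inv τ'.1 (fpf_app τ'))) x = extL τ'.1 x
  rw [Function.Involutive.coe_toPerm]

lemma PsiR_apply (a : Fin m) (τ' : FPFInvolution m) (x : Fin (m+2)) :
    (PsiR a τ').1 x = extR a τ'.1 x := by
  show (Function.Involutive.toPerm _ (extR_inv τ'.1 (fpf_app τ') τ'.2.2 a)) x = extR a τ'.1 x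
  rw [Function.Involutive.coe_toPerm]

def Psi : FPFInvolution m ⊕ (Fin m × FPFInvolution m) → FPFInvolution (m+2) :=
  Sum.elim PsiL (fun p => PsiR p.1 p.2)

lemma Psi_inl_apply (τ' : FPFInvolution m) (x : Fin (m+2)) :
    (Psi (Sum.inl τ')).1 x = extL τ'.1 x := PsiL_apply τ' x

lemma Psi_inr_apply (a : Fin m) (τ' : FPFInvolution m) (x : Fin (m+2)) :
    (Psi (Sum.inr (a, τ'))).1 x = extR a τ'.1 x := PsiR_apply a τ' x

lemma Psi_inj : Function.Injective (Psi (m := m)) := by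
  intro u v huv
  have happ : ∀ x, (Psi u).1 x = (Psi v).1 x := fun x => by rw [huv]
  rcases u with τ₁ | ⟨a₁, τ₁⟩ <;> rcases v with τ₂ | ⟨a₂, τ₂⟩
  · congr 1
    apply Subtype.ext
    apply Equiv.ext
    intro j
    have := happ (inc j)
    rw [Psi_inl_apply, Psi_inl_apply, extL_inc, extL_inc] at this
    exact inc_inj this
  · exfalso
    have := happ i1
    rw [Psi_inl_apply, Psi_inr_apply, extL_i1, extR_i1] at this
    exact (inc_ne_i0 _) this.symm
  · exfalso
    have := happ i1
    rw [Psi_inr_apply, Psi_inl_apply, extR_i1, extL_i1] at this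
    exact (inc_ne_i0 _) this
  · have ha : a₁ = a₂ := by
      have := happ i0
      rw [Psi_inr_apply, Psi_inr_apply, extR_i0, extR_i0] at this
      exact inc_inj this
    subst ha
    have hb : τ₁.1 a₁ = τ₂.1 a₁ := by
      have := happ i1
      rw [Psi_inr_apply, Psi_inr_apply, extR_i1, extR_i1] at this
      exact inc_inj this
    have hτ : τ₁ = τ₂ := by
      apply Subtype.ext
      apply Equiv.ext
      intro j
      by_cases h1 : j = a₁
      · subst h1; exact hb
      · by_cases h2 : j = τ₁.1 a₁
        · subst h2
          rw [fpf_app τ₁, hb, fpf_app τ₂]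
        · have h2' : j ≠ τ₂.1 a₁ := by rw [← hb]; exact h2
          have := happ (inc j)
          rw [Psi_inr_apply, Psi_inr_apply,
            extR_inc _ _ j h1 h2, extR_inc _ _ j h1 h2'] at this
          exact inc_inj this
    rw [hτ]

lemma Psi_surj : Function.Surjective (Psi (m := m)) := by
  intro τ
  by_cases ht : τ.1 i1 = i0
  · -- left case
    have hval : ∀ j : Fin m, (τ.1 (inc j)).1 < m := by
      intro j
      apply val_lt_of_ne
      · intro h
        have : inc j = τ.1 i0 := by rw [← h, fpf_app]
        rw [← ht, fpf_app] at this
        exact inc_ne_i1 j this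
      · intro h
        have : inc j = τ.1 i1 := by rw [← h, fpf_app]
        rw [ht] at this
        exact inc_ne_i0 j this
    set f : Fin m → Fin m := fun j => ⟨(τ.1 (inc j)).1, hval j⟩ with hfdef
    have hincf : ∀ j, inc (f j) = τ.1 (inc j) := fun j => Fin.ext rfl
    have hfinv : Function.Involutive f := by
      intro j
      apply Fin.ext
      show (τ.1 (inc (f j))).1 = j.1
      rw [hincf, fpf_app]
      rfl
    have hffpf : ∀ j, f j ≠ j := by
      intro j h
      have : inc (f j) = inc j := by rw [h]
      rw [hincf] at this
      exact τ.2.2 (inc j) this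
    refine ⟨Sum.inl ⟨Function.Involutive.toPerm f hfinv,
      (sq_iff _).2 (fun x => hfinv x), fun x => hffpf x⟩, ?_⟩
    apply Subtype.ext
    apply Equiv.ext
    intro x
    have key : ∀ y, (Psi (Sum.inl (⟨Function.Involutive.toPerm f hfinv,
        (sq_iff _).2 (fun x => hfinv x), fun x => hffpf x⟩ : FPFInvolution m))).1 y
        = extL (Function.Involutive.toPerm f hfinv) y := fun y => Psi_inl_apply _ y
    rw [key]
    rcases fin_cases3 x with ⟨j, rfl⟩ | rfl | rfl
    · rw [extL_inc]
      have : (Function.Involutive.toPerm f hfinv) j = f j := congrFun (Function.Involutive.coe_toPerm _) _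
      rw [this]
      exact hincf j
    · rw [extL_i0, ← ht, fpf_app]
    · rw [extL_i1, ht]
  · -- right case
    have hb0 : τ.1 i1 ≠ i0 := ht
    have hb1 : τ.1 i1 ≠ i1 := τ.2.2 i1
    have ha0 : τ.1 i0 ≠ i0 := τ.2.2 i0
    have ha1 : τ.1 i0 ≠ i1 := by
      intro h
      apply ht
      rw [← h, fpf_app]
    set b : Fin m := ⟨(τ.1 i1).1, val_lt_of_ne _ hb0 hb1⟩ with hbdef
    set a : Fin m := ⟨(τ.1 i0).1, val_lt_of_ne _ ha0 ha1⟩ with hadef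
    have hincb : inc b = τ.1 i1 := Fin.ext rfl
    have hinca : inc a = τ.1 i0 := Fin.ext rfl
    have hab : a ≠ b := by
      intro h
      have : inc a = inc b := by rw [h]
      rw [hinca, hincb] at this
      exact i0_ne_i1 (τ.1.injective this)
    have hval : ∀ j : Fin m, j ≠ a → j ≠ b → (τ.1 (inc j)).1 < m := by
      intro j hja hjb
      apply val_lt_of_ne
      · intro h
        apply hja
        apply inc_inj
        rw [hinca, ← h, fpf_app]
      · intro h
        apply hjb
        apply inc_inj
        rw [hincb, ← h, fpf_app]
    set f : Fin m → Fin m := fun j =>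
      if h1 : j = a then b else if h2 : j = b then a
      else ⟨(τ.1 (inc j)).1, hval j h1 h2⟩ with hfdef
    have hfa : f a = b := by rw [hfdef]; simp
    have hfb : f b = a := by
      rw [hfdef]
      simp only []
      rw [dif_neg (Ne.symm hab)]
      simp
    have hfj : ∀ j, j ≠ a → j ≠ b → inc (f j) = τ.1 (inc j) := by
      intro j h1 h2
      rw [hfdef]
      simp only []
      rw [dif_neg h1, dif_neg h2]
      exact Fin.ext rfl
    have hfinv : Function.Involutive f := by
      intro j
      by_cases h1 : j = a
      · subst h1; rw [hfa, hfb]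
      · by_cases h2 : j = b
        · subst h2; rw [hfb, hfa]
        · have key : inc (f j) = τ.1 (inc j) := hfj j h1 h2
          have hfja : f j ≠ a := by
            intro h
            have h3 : τ.1 (inc j) = τ.1 i0 := by
              rw [← key, h, hinca]
            exact inc_ne_i0 j (τ.1.injective h3)
          have hfjb : f j ≠ b := by
            intro h
            have h3 : τ.1 (inc j) = τ.1 i1 := by
              rw [← key, h, hincb]
            exact inc_ne_i1 j (τ.1.injective h3)
          have key2 : inc (f (f j)) = τ.1 (inc (f j)) := hfj _ hfja hfjb
          apply inc_inj
          rw [key2, key, fpf_app]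
    have hffpf : ∀ j, f j ≠ j := by
      intro j h
      by_cases h1 : j = a
      · subst h1; rw [hfa] at h; exact hab h.symm
      · by_cases h2 : j = b
        · subst h2; rw [hfb] at h; exact hab h
        · have := hfj j h1 h2
          rw [h] at this
          exact τ.2.2 (inc j) this.symm
    set τ'' : Equiv.Perm (Fin m) := Function.Involutive.toPerm f hfinv with hτdef
    have hτf : ∀ j, τ'' j = f j := fun j => congrFun (Function.Involutive.coe_toPerm _) _
    refine ⟨Sum.inr (a, ⟨τ'', (sq_iff _).2 (fun x => hfinv x),
      fun x => (hτf x ▸ hffpf x)⟩), ?_⟩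
    apply Subtype.ext
    apply Equiv.ext
    intro x
    have key : ∀ y, (Psi (Sum.inr (a, (⟨τ'', (sq_iff _).2 (fun x => hfinv x),
        fun x => (hτf x ▸ hffpf x)⟩ : FPFInvolution m)))).1 y = extR a τ'' y :=
      fun y => Psi_inr_apply _ _ y
    rw [key]
    have hτa : τ'' a = b := by rw [hτf, hfa]
    have hτane : τ'' a ≠ a := by rw [hτa]; exact Ne.symm hab
    rcases fin_cases3 x with ⟨j, rfl⟩ | rfl | rfl
    · by_cases h1 : j = a
      · subst h1
        rw [extR_a, hinca, fpf_app]
      · by_cases h2 : j = b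
        · subst h2
          have : inc b = inc (τ'' a) := by rw [hτa]
          rw [this, extR_b a τ'' hτane, hτa, hincb, fpf_app]
        · rw [extR_inc a τ'' j h1 (by rw [hτa]; exact h2), hτf]
          exact hfj j h1 h2
    · rw [extR_i0, hinca]
    · rw [extR_i1, hτa, hincb]


-- ===================== chunk 5: orbit count lemmas =====================

lemma eqvGen_step {α : Type*} {R S : α → α → Prop} : True := trivial

lemma card_option' {β : Type} [Finite β] : Nat.card (Option β) = Nat.card β + 1 := by
  have e : Option β ≃ β ⊕ (PUnit : Type) := Equiv.optionEquivSumPUnit β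
  rw [Nat.card_congr e, Nat.card_sum]
  simp

section orbit_lemmas

variable (hm : Even m)

/-- Case A: extending by a new 2-cycle paired by both involutions adds one orbit. -/
lemma cardA (τ' : Equiv.Perm (Fin m)) (Tb : Equiv.Perm (Fin (m+2)))
    (hT : ∀ x, Tb x = extL τ' x) :
    Nat.card (Quotient (EqvGen.setoid (stepRel (sigma0 (m+2) (even_m2 hm)) Tb))) =
      Nat.card (Quotient (EqvGen.setoid (stepRel (sigma0 m hm) τ'))) + 1 := by
  set σb := sigma0 (m+2) (even_m2 hm) with hσb
  set σs := sigma0 m hm with hσs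
  set S := stepRel σb Tb with hS
  set R := stepRel σs τ' with hR
  have hRS : ∀ j k : Fin m, R j k → S (inc j) (inc k) := by
    intro j k h
    rcases h with h | h
    · exact Or.inl (by rw [hσb, sigma0_compat hm, h])
    · exact Or.inr (by rw [hT, extL_inc, h])
  -- the lifted map
  have hstep : ∀ x y : Fin (m+2), S x y →
      (Quotient.mk (EqvGen.setoid R) ∘ fun j => j) = (Quotient.mk (EqvGen.setoid R) ∘ fun j => j) := fun _ _ _ => rfl
  let φ : Fin (m+2) → Option (Quotient (EqvGen.setoid R)) := fun x =>
    if h : x.1 < m then some (Quotient.mk (EqvGen.setoid R) ⟨x.1, h⟩) else none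
  have φ_inc : ∀ j : Fin m, φ (inc j) = some (Quotient.mk (EqvGen.setoid R) j) := by
    intro j
    show dite _ _ _ = _
    rw [dif_pos (inc_lt j)]
    rfl
  have φ_i0 : φ (i0 : Fin (m+2)) = none := by
    show dite _ _ _ = _
    rw [dif_neg (by rw [val_i0]; omega)]
  have φ_i1 : φ (i1 : Fin (m+2)) = none := by
    show dite _ _ _ = _
    rw [dif_neg (by rw [val_i1]; omega)]
  have φ_step : ∀ x y : Fin (m+2), S x y → φ x = φ y := by
    intro x y h
    rcases fin_cases3 x with ⟨j, rfl⟩ | rfl | rfl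
    · rcases h with h | h
      · rw [← h, hσb, sigma0_compat hm, φ_inc, φ_inc]
        exact congrArg some (Quotient.sound (EqvGen.rel _ _ (Or.inl rfl)))
      · rw [← h, hT, extL_inc, φ_inc, φ_inc]
        exact congrArg some (Quotient.sound (EqvGen.rel _ _ (Or.inr rfl)))
    · rcases h with h | h
      · rw [← h, hσb, sigma0_i0 hm, φ_i0, φ_i1]
      · rw [← h, hT, extL_i0, φ_i0, φ_i1]
    · rcases h with h | h
      · rw [← h, hσb, sigma0_i1 hm, φ_i1, φ_i0]
      · rw [← h, hT, extL_i1, φ_i1, φ_i0]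
  have φ_sound : ∀ x y : Fin (m+2), EqvGen S x y → φ x = φ y := by
    intro x y h
    induction h with
    | rel a b hab => exact φ_step a b hab
    | refl a => rfl
    | symm a b _ ih => exact ih.symm
    | trans a b c _ _ ih1 ih2 => exact ih1.trans ih2
  have ψ_sound : ∀ j k : Fin m, EqvGen R j k →
      Quotient.mk (EqvGen.setoid S) (inc j) = Quotient.mk (EqvGen.setoid S) (inc k) := by
    intro j k h
    exact Quotient.sound (eqvGen_lift inc (fun a b hab => EqvGen.rel _ _ (hRS a b hab)) j k h)
  let ψ : Option (Quotient (EqvGen.setoid R)) → Quotient (EqvGen.setoid S) := fun o =>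
    o.elim (Quotient.mk (EqvGen.setoid S) i1)
      (Quotient.lift (fun j => Quotient.mk (EqvGen.setoid S) (inc j)) (fun j k h => ψ_sound j k h))
  have hcongr : Quotient (EqvGen.setoid S) ≃ Option (Quotient (EqvGen.setoid R)) := by
    refine ⟨Quotient.lift φ (fun x y h => φ_sound x y h), ψ, ?_, ?_⟩
    · refine Quotient.ind (fun x => ?_)
      rcases fin_cases3 x with ⟨j, rfl⟩ | rfl | rfl
      · show ψ (φ (inc j)) = _
        rw [φ_inc]
        rfl
      · show ψ (φ (i0 : Fin (m+2))) = _
        rw [φ_i0]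
        show Quotient.mk _ i1 = Quotient.mk _ i0
        exact Quotient.sound (EqvGen.rel _ _ (Or.inl (by rw [hσb, sigma0_i1 hm])))
      · show ψ (φ (i1 : Fin (m+2))) = _
        rw [φ_i1]
        rfl
    · intro o
      rcases o with _ | q
      · show Quotient.lift φ _ (Quotient.mk _ i1) = none
        show φ i1 = none
        exact φ_i1
      · obtain ⟨j, rfl⟩ := Quotient.exists_rep q
        show φ (inc j) = some (Quotient.mk _ j)
        exact φ_inc j
  rw [Nat.card_congr hcongr, card_option']

/-- Case B: contraction preserves the number of orbits. -/
lemma cardB (τ' : Equiv.Perm (Fin m)) (hi : ∀ j, τ' (τ' j) = j) (hf : ∀ j, τ' j ≠ j)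
    (a : Fin m) (Tb : Equiv.Perm (Fin (m+2))) (hT : ∀ x, Tb x = extR a τ' x) :
    Nat.card (Quotient (EqvGen.setoid (stepRel (sigma0 (m+2) (even_m2 hm)) Tb))) =
      Nat.card (Quotient (EqvGen.setoid (stepRel (sigma0 m hm) τ'))) := by
  set σb := sigma0 (m+2) (even_m2 hm) with hσb
  set σs := sigma0 m hm with hσs
  set S := stepRel σb Tb with hS
  set R := stepRel σs τ' with hR
  set b : Fin m := τ' a with hbdef
  have hab : a ≠ b := fun h => hf a (by rw [← hbdef]; exact h.symm)
  let g : Fin (m+2) → Fin m := fun x => if h : x.1 < m then ⟨x.1, h⟩ else if x.1 = m then a else b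
  have g_inc : ∀ j : Fin m, g (inc j) = j := by
    intro j
    show dite _ _ _ = _
    rw [dif_pos (inc_lt j)]
    rfl
  have g_i0 : g (i0 : Fin (m+2)) = a := by
    show dite _ _ _ = _
    rw [dif_neg (by rw [val_i0]; omega), if_pos val_i0]
  have g_i1 : g (i1 : Fin (m+2)) = b := by
    show dite _ _ _ = _
    rw [dif_neg (by rw [val_i1]; omega), if_neg (by rw [val_i1]; omega)]
  have hSR : ∀ x y : Fin (m+2), S x y → EqvGen R (g x) (g y) := by
    intro x y h
    rcases fin_cases3 x with ⟨j, rfl⟩ | rfl | rfl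
    · rcases h with h | h
      · rw [← h, hσb, sigma0_compat hm, g_inc, g_inc]
        exact EqvGen.rel _ _ (Or.inl rfl)
      · rw [← h, hT]
        by_cases h1 : j = a
        · subst h1
          rw [extR_a, g_inc, g_i0]
          exact EqvGen.refl _
        · by_cases h2 : j = b
          · subst h2
            have : extR a τ' (inc b) = i1 := by
              rw [hbdef]
              exact extR_b a τ' (hf a)
            rw [this, g_inc, g_i1]
            exact EqvGen.refl _
          · rw [extR_inc a τ' j h1 (hbdef ▸ h2), g_inc, g_inc]
            exact EqvGen.rel _ _ (Or.inr rfl)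
    · rcases h with h | h
      · rw [← h, hσb, sigma0_i0 hm, g_i0, g_i1]
        exact EqvGen.rel _ _ (Or.inr rfl)
      · rw [← h, hT, extR_i0, g_i0, g_inc]
        exact EqvGen.refl _
    · rcases h with h | h
      · rw [← h, hσb, sigma0_i1 hm, g_i1, g_i0]
        exact EqvGen.rel _ _ (Or.inr (by rw [hbdef, hi]))
      · rw [← h, hT, extR_i1, g_i1, g_inc]
        exact EqvGen.refl _
  have hRS : ∀ j k : Fin m, R j k → EqvGen S (inc j) (inc k) := by
    intro j k h
    rcases h with h | h
    · exact EqvGen.rel _ _ (Or.inl (by rw [hσb, sigma0_compat hm, h]))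
    · by_cases h1 : j = a
      · subst h1
        have s1 : S (inc j) i0 := Or.inr (by rw [hT, extR_a])
        have s2 : S (i0 : Fin (m+2)) i1 := Or.inl (by rw [hσb, sigma0_i0 hm])
        have s3 : S (i1 : Fin (m+2)) (inc k) := Or.inr (by rw [hT, extR_i1, h])
        exact EqvGen.trans _ _ _ (EqvGen.rel _ _ s1)
          (EqvGen.trans _ _ _ (EqvGen.rel _ _ s2) (EqvGen.rel _ _ s3))
      · by_cases h2 : j = b
        · subst h2
          have hk : k = a := by rw [← h, hbdef, hi]
          rw [hk]
          have s1 : S (inc b) i1 := Or.inr (by rw [hT, hbdef, extR_b a τ' (hf a)])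
          have s2 : S (i1 : Fin (m+2)) i0 := Or.inl (by rw [hσb, sigma0_i1 hm])
          have s3 : S (i0 : Fin (m+2)) (inc a) := Or.inr (by rw [hT, extR_i0])
          exact EqvGen.trans _ _ _ (EqvGen.rel _ _ s1)
            (EqvGen.trans _ _ _ (EqvGen.rel _ _ s2) (EqvGen.rel _ _ s3))
        · exact EqvGen.rel _ _ (Or.inr (by rw [hT, extR_inc a τ' j h1 (hbdef ▸ h2), h]))
  have hgf : ∀ x : Fin (m+2), EqvGen S (inc (g x)) x := by
    intro x
    rcases fin_cases3 x with ⟨j, rfl⟩ | rfl | rfl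
    · rw [g_inc]; exact EqvGen.refl _
    · rw [g_i0]
      exact EqvGen.rel _ _ (Or.inr (by rw [hT, extR_a]))
    · rw [g_i1]
      exact EqvGen.rel _ _ (Or.inr (by rw [hT, hbdef, extR_b a τ' (hf a)]))
  have hfg : ∀ j : Fin m, EqvGen R (g (inc j)) j := by
    intro j
    rw [g_inc]
    exact EqvGen.refl _
  exact Nat.card_congr (quotEquiv (fun x => g x) inc hSR
    (fun j k h => hRS j k h) hgf hfg)

end orbit_lemmas


-- ===================== chunk 6: conjugation and counting =====================

instance (d : ℕ) : Finite (FPFInvolution d) := Subtype.finite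

noncomputable instance (d : ℕ) : Fintype (FPFInvolution d) := Fintype.ofFinite _

/-- `orbCount'` is invariant under simultaneous conjugation. -/
lemma orbCount'_conj {d : ℕ} (π σ τ : Equiv.Perm (Fin d)) :
    orbCount' (π * σ * π⁻¹) (π * τ * π⁻¹) = orbCount' σ τ := by
  apply Nat.card_congr
  refine quotEquiv (fun x => π⁻¹ x) (fun x => π x) ?_ ?_ ?_ ?_
  · intro x y h
    refine EqvGen.rel _ _ ?_
    rcases h with h | h
    · refine Or.inl ?_
      have := congrArg (fun z => π⁻¹ z) h
      simpa using this
    · refine Or.inr ?_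
      have := congrArg (fun z => π⁻¹ z) h
      simpa using this
  · intro x y h
    refine EqvGen.rel _ _ ?_
    rcases h with h | h
    · exact Or.inl (by simp [h])
    · exact Or.inr (by simp [h])
  · intro x
    show EqvGen _ (π (π⁻¹ x)) x
    have : π (π⁻¹ x) = x := by simp
    rw [this]
    exact EqvGen.refl _
  · intro y
    show EqvGen _ (π⁻¹ (π y)) y
    have : π⁻¹ (π y) = y := by simp
    rw [this]
    exact EqvGen.refl _

lemma cycleType_fpf {d : ℕ} (σ : Equiv.Perm (Fin d)) (h1 : σ * σ = 1)
    (h2 : ∀ x, σ x ≠ x) : σ.cycleType = Multiset.replicate (d / 2) 2 := by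
  have hall : ∀ r ∈ σ.cycleType, r = 2 := by
    intro r hr
    have hge : 2 ≤ r := Equiv.Perm.two_le_of_mem_cycleType hr
    have hdvd : r ∣ orderOf σ := by
      rw [← Equiv.Perm.lcm_cycleType]
      exact Multiset.dvd_lcm hr
    have ho : orderOf σ ∣ 2 := orderOf_dvd_of_pow_eq_one (by rw [pow_two]; exact h1)
    have : r ∣ 2 := hdvd.trans ho
    have := Nat.le_of_dvd (by norm_num) this
    omega
  have hsum : σ.cycleType.sum = d := by
    rw [Equiv.Perm.sum_cycleType]
    have : σ.support = Finset.univ := by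
      ext x
      simp [Equiv.Perm.mem_support, h2 x]
    rw [this]
    simp
  have hrep : σ.cycleType = Multiset.replicate (Multiset.card σ.cycleType) 2 :=
    Multiset.eq_replicate_card.2 hall
  have hcard : Multiset.card σ.cycleType = d / 2 := by
    have := hsum
    rw [hrep, Multiset.sum_replicate, smul_eq_mul] at this
    omega
  rw [hrep, hcard]

lemma fpf_isConj {d : ℕ} (σ σ' : FPFInvolution d) : ∃ π : Equiv.Perm (Fin d),
    π * σ.1 * π⁻¹ = σ'.1 := by
  have h : IsConj σ.1 σ'.1 := by
    rw [Equiv.Perm.isConj_iff_cycleType_eq, cycleType_fpf σ.1 σ.2.1 σ.2.2,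
      cycleType_fpf σ'.1 σ'.2.1 σ'.2.2]
  exact isConj_iff.1 h

/-- conjugating a FPF involution -/
def conjFPF {d : ℕ} (π : Equiv.Perm (Fin d)) (τ : FPFInvolution d) : FPFInvolution d :=
  ⟨π * τ.1 * π⁻¹, by
    constructor
    · have := τ.2.1
      group
      calc π * τ.1 ^ 2 * π⁻¹ = π * (τ.1 * τ.1) * π⁻¹ := by rw [pow_two]
        _ = 1 := by rw [this]; group
    · intro x h
      simp only [Equiv.Perm.mul_apply] at h
      have := congrArg (fun z => π⁻¹ z) h
      simp only [Equiv.Perm.inv_def, Equiv.symm_apply_apply] at this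
      exact τ.2.2 (π⁻¹ x) this⟩

def conjFPFEquiv {d : ℕ} (π : Equiv.Perm (Fin d)) : FPFInvolution d ≃ FPFInvolution d where
  toFun := conjFPF π
  invFun := conjFPF π⁻¹
  left_inv := by
    intro τ
    apply Subtype.ext
    show π⁻¹ * (π * τ.1 * π⁻¹) * π⁻¹⁻¹ = τ.1
    group
  right_inv := by
    intro τ
    apply Subtype.ext
    show π * (π⁻¹ * τ.1 * π⁻¹⁻¹) * π⁻¹ = τ.1
    group

lemma orbCount'_conjFPF {d : ℕ} (π σ : Equiv.Perm (Fin d)) (τ : FPFInvolution d) :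
    orbCount' (π * σ * π⁻¹) ((conjFPF π τ).1) = orbCount' σ τ.1 :=
  orbCount'_conj π σ τ.1

/-- symmetry: the distribution of orbit counts does not depend on the base involution -/
lemma count_symm {d : ℕ} (σ σ' : FPFInvolution d) (k : ℕ) :
    Nat.card {τ : FPFInvolution d // orbCount' σ.1 τ.1 = k} =
      Nat.card {τ : FPFInvolution d // orbCount' σ'.1 τ.1 = k} := by
  obtain ⟨π, hπ⟩ := fpf_isConj σ σ'
  apply Nat.card_congr
  refine Equiv.subtypeEquiv (conjFPFEquiv π) ?_
  intro τ
  show orbCount' σ.1 τ.1 = k ↔ orbCount' σ'.1 ((conjFPF π τ).1) = k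
  rw [← hπ, orbCount'_conjFPF]

lemma sum_symm {d : ℕ} (σ σ' : FPFInvolution d) :
    ∑ τ : FPFInvolution d, orbCount' σ.1 τ.1 =
      ∑ τ : FPFInvolution d, orbCount' σ'.1 τ.1 := by
  obtain ⟨π, hπ⟩ := fpf_isConj σ σ'
  refine Fintype.sum_equiv (conjFPFEquiv π) _ _ ?_
  intro τ
  show orbCount' σ.1 τ.1 = orbCount' σ'.1 ((conjFPF π τ).1)
  rw [← hπ, orbCount'_conjFPF]

/-! the counting quantities -/

lemma even2n (n : ℕ) : Even (2 * n) := ⟨n, two_mul n⟩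

noncomputable def Tc (n : ℕ) : ℕ := Nat.card (FPFInvolution (2 * n))

noncomputable def Fc (n k : ℕ) : ℕ :=
  Nat.card {τ : FPFInvolution (2 * n) // orbCount' (sigma0 (2 * n) (even2n n)) τ.1 = k}

noncomputable def Sc (n : ℕ) : ℕ :=
  ∑ τ : FPFInvolution (2 * n), orbCount' (sigma0 (2 * n) (even2n n)) τ.1

def fpf0 : FPFInvolution 0 :=
  ⟨1, by simp, fun x => x.elim0⟩

instance : Unique (FPFInvolution 0) where
  default := fpf0
  uniq := by
    intro τ
    apply Subtype.ext
    apply Equiv.ext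
    intro x
    exact x.elim0

lemma Tc_zero : Tc 0 = 1 := by
  show Nat.card (FPFInvolution 0) = 1
  exact Nat.card_unique

lemma orbCount'_zero (σ τ : Equiv.Perm (Fin 0)) : orbCount' σ τ = 0 := by
  have : IsEmpty (Quotient (EqvGen.setoid (stepRel σ τ))) := by
    constructor
    intro q
    obtain ⟨x, _⟩ := Quotient.exists_rep q
    exact x.elim0
  exact Nat.card_eq_zero.2 (Or.inl this)

lemma Fc_zero_zero : Fc 0 0 = 1 := by
  unfold Fc
  rw [Nat.card_eq_one_iff_unique]
  constructor
  · constructor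
    intro a b
    apply Subtype.ext
    apply Subtype.ext
    apply Equiv.ext
    intro x
    exact x.elim0
  · exact ⟨⟨fpf0, orbCount'_zero _ _⟩⟩

lemma Fc_zero_succ (k : ℕ) : Fc 0 (k + 1) = 0 := by
  unfold Fc
  rw [Nat.card_eq_zero]
  left
  constructor
  rintro ⟨τ, hτ⟩
  rw [orbCount'_zero] at hτ
  omega

lemma Sc_zero : Sc 0 = 0 := by
  unfold Sc
  apply Finset.sum_eq_zero
  intro τ _
  exact orbCount'_zero _ _

/-- the master bijection as an equiv, at `m = 2*n` -/
noncomputable def PsiEquiv (m : ℕ) :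
    (FPFInvolution m ⊕ (Fin m × FPFInvolution m)) ≃ FPFInvolution (m + 2) :=
  Equiv.ofBijective Psi ⟨Psi_inj, Psi_surj⟩

lemma orb_PsiL (hm : Even m) (τ' : FPFInvolution m) :
    orbCount' (sigma0 (m+2) (even_m2 hm)) (Psi (Sum.inl τ')).1 =
      orbCount' (sigma0 m hm) τ'.1 + 1 :=
  cardA hm τ'.1 _ (Psi_inl_apply τ')

lemma orb_PsiR (hm : Even m) (a : Fin m) (τ' : FPFInvolution m) :
    orbCount' (sigma0 (m+2) (even_m2 hm)) (Psi (Sum.inr (a, τ'))).1 =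
      orbCount' (sigma0 m hm) τ'.1 :=
  cardB hm τ'.1 (fpf_app τ') τ'.2.2 a _ (Psi_inr_apply a τ')

lemma sigma0_irrel (d : ℕ) (h1 h2 : Even d) : sigma0 d h1 = sigma0 d h2 := rfl

lemma Tc_succ (n : ℕ) : Tc (n + 1) = (2 * n + 1) * Tc n := by
  show Nat.card (FPFInvolution (2 * n + 2)) = (2 * n + 1) * Nat.card (FPFInvolution (2 * n))
  rw [Nat.card_congr (PsiEquiv (2 * n)).symm, Nat.card_sum, Nat.card_prod]
  rw [Nat.card_eq_fintype_card (α := Fin (2 * n)), Fintype.card_fin]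
  ring

lemma PsiEquiv_apply (m : ℕ) (u : FPFInvolution m ⊕ (Fin m × FPFInvolution m)) :
    PsiEquiv m u = Psi u := rfl

def prodSub {A B : Type*} (q : B → Prop) : {p : A × B // q p.2} ≃ A × {b // q b} where
  toFun := fun p => (p.1.1, ⟨p.1.2, p.2⟩)
  invFun := fun x => ⟨(x.1, x.2.1), x.2.2⟩
  left_inv := fun _ => rfl
  right_inv := fun _ => rfl

lemma Fc_succ_cases (n k : ℕ) :
    Fc (n + 1) k =
      Nat.card {τ' : FPFInvolution (2*n) //
          orbCount' (sigma0 (2*n) (even2n n)) τ'.1 + 1 = k} +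
      2 * n * Nat.card {τ' : FPFInvolution (2*n) //
          orbCount' (sigma0 (2*n) (even2n n)) τ'.1 = k} := by
  show Nat.card {τ : FPFInvolution (2*n+2) //
      orbCount' (sigma0 (2*n+2) (even_m2 (even2n n))) τ.1 = k} = _
  have h1 : Nat.card {τ : FPFInvolution (2*n+2) //
        orbCount' (sigma0 (2*n+2) (even_m2 (even2n n))) τ.1 = k}
      = Nat.card {u : FPFInvolution (2*n) ⊕ (Fin (2*n) × FPFInvolution (2*n)) //
          orbCount' (sigma0 (2*n+2) (even_m2 (even2n n))) (Psi u).1 = k} :=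
    (Nat.card_congr (Equiv.subtypeEquiv (PsiEquiv (2*n)) (fun u => Iff.rfl))).symm
  rw [h1, Nat.card_congr (Equiv.subtypeSum), Nat.card_sum]
  congr 1
  · apply Nat.card_congr
    refine Equiv.subtypeEquiv (Equiv.refl _) (fun τ' => ?_)
    rw [Equiv.refl_apply, orb_PsiL (even2n n)]
  · have h2 : Nat.card {p : Fin (2*n) × FPFInvolution (2*n) //
        orbCount' (sigma0 (2*n+2) (even_m2 (even2n n))) (Psi (Sum.inr p)).1 = k}
      = Nat.card {p : Fin (2*n) × FPFInvolution (2*n) //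
        orbCount' (sigma0 (2*n) (even2n n)) p.2.1 = k} := by
      apply Nat.card_congr
      refine Equiv.subtypeEquiv (Equiv.refl _) (fun p => ?_)
      rw [Equiv.refl_apply]
      have := orb_PsiR (even2n n) p.1 p.2
      rw [show (p.1, p.2) = p from rfl] at this
      rw [this]
    rw [h2, Nat.card_congr (prodSub (fun τ' : FPFInvolution (2*n) => orbCount' (sigma0 (2*n) (even2n n)) τ'.1 = k)), Nat.card_prod,
      Nat.card_eq_fintype_card (α := Fin (2*n)), Fintype.card_fin]

lemma Fc_succ_succ (n k : ℕ) :
    Fc (n + 1) (k + 1) = Fc n k + 2 * n * Fc n (k + 1) := by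
  rw [Fc_succ_cases]
  congr 1
  apply Nat.card_congr
  refine Equiv.subtypeEquiv (Equiv.refl _) (fun τ' => ?_)
  rw [Equiv.refl_apply]
  omega

lemma Fc_succ_zero (n : ℕ) : Fc (n + 1) 0 = 2 * n * Fc n 0 := by
  rw [Fc_succ_cases]
  have : Nat.card {τ' : FPFInvolution (2*n) //
      orbCount' (sigma0 (2*n) (even2n n)) τ'.1 + 1 = 0} = 0 := by
    rw [Nat.card_eq_zero]
    left
    exact ⟨fun x => by omega⟩
  rw [this]
  show 0 + 2 * n * Fc n 0 = 2 * n * Fc n 0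
  omega

lemma Sc_succ (n : ℕ) : Sc (n + 1) = Tc n + (2 * n + 1) * Sc n := by
  show (∑ τ : FPFInvolution (2*n+2), orbCount' (sigma0 (2*n+2) (even_m2 (even2n n))) τ.1) = _
  rw [← Equiv.sum_comp (PsiEquiv (2*n))
    (fun τ => orbCount' (sigma0 (2*n+2) (even_m2 (even2n n))) τ.1)]
  simp only [PsiEquiv_apply]
  rw [Fintype.sum_sum_type]
  have hL : (∑ τ' : FPFInvolution (2*n),
      orbCount' (sigma0 (2*n+2) (even_m2 (even2n n))) (Psi (Sum.inl τ')).1)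
      = Sc n + Tc n := by
    have : ∀ τ' : FPFInvolution (2*n),
        orbCount' (sigma0 (2*n+2) (even_m2 (even2n n))) (Psi (Sum.inl τ')).1
        = orbCount' (sigma0 (2*n) (even2n n)) τ'.1 + 1 := fun τ' => orb_PsiL (even2n n) τ'
    rw [Finset.sum_congr rfl (fun τ' _ => this τ'), Finset.sum_add_distrib]
    congr 1
    rw [Finset.sum_const, Finset.card_univ, smul_eq_mul, mul_one, Tc,
      Nat.card_eq_fintype_card]
  have hR : (∑ p : Fin (2*n) × FPFInvolution (2*n),
      orbCount' (sigma0 (2*n+2) (even_m2 (even2n n))) (Psi (Sum.inr p)).1)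
      = 2 * n * Sc n := by
    rw [Fintype.sum_prod_type]
    have : ∀ (a : Fin (2*n)) (τ' : FPFInvolution (2*n)),
        orbCount' (sigma0 (2*n+2) (even_m2 (even2n n))) (Psi (Sum.inr (a, τ'))).1
        = orbCount' (sigma0 (2*n) (even2n n)) τ'.1 := fun a τ' => orb_PsiR (even2n n) a τ'
    rw [Finset.sum_congr rfl (fun a _ => Finset.sum_congr rfl (fun τ' _ => this a τ'))]
    rw [Finset.sum_const, Finset.card_univ, smul_eq_mul, Fintype.card_fin]
    rfl
  rw [hL, hR]
  ring


-- ===================== chunk 7: Poisson-binomial arithmetic =====================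

noncomputable def pR (j : ℕ) : ℝ := 1 / (2 * (j : ℝ) + 1)

noncomputable def Qd (n k : ℕ) : ℝ :=
  ∑ A ∈ Finset.powersetCard k (Finset.range n),
    (∏ j ∈ A, pR j) * ∏ j ∈ Finset.range n \ A, (1 - pR j)

lemma Qd_zero_zero : Qd 0 0 = 1 := by
  unfold Qd
  simp

lemma Qd_zero_succ (k : ℕ) : Qd 0 (k + 1) = 0 := by
  unfold Qd
  rw [Finset.powersetCard_eq_empty.2 (by simp)]
  simp

lemma pos_pR (n : ℕ) : 0 < pR n := by
  unfold pR
  positivity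

lemma pR_mul (n : ℕ) : pR n * (2 * (n : ℝ) + 1) = 1 := by
  unfold pR
  field_simp

lemma Qd_succ_zero (n : ℕ) : Qd (n + 1) 0 = (1 - pR n) * Qd n 0 := by
  unfold Qd
  simp only [Finset.powersetCard_zero, Finset.sum_singleton]
  rw [Finset.sdiff_empty, Finset.sdiff_empty, Finset.range_add_one,
    Finset.prod_insert Finset.notMem_range_self]
  ring

lemma Qd_succ_succ (n k : ℕ) :
    Qd (n + 1) (k + 1) = pR n * Qd n k + (1 - pR n) * Qd n (k + 1) := by
  unfold Qd
  rw [Finset.range_add_one,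
    Finset.powersetCard_succ_insert Finset.notMem_range_self]
  have hdisj : Disjoint (Finset.powersetCard (k+1) (Finset.range n))
      ((Finset.powersetCard k (Finset.range n)).image (insert n)) := by
    rw [Finset.disjoint_left]
    intro A hA hA'
    obtain ⟨B, hB, rfl⟩ := Finset.mem_image.1 hA'
    have hBn : n ∉ B := fun h => Finset.notMem_range_self
      ((Finset.mem_powersetCard.1 hB).1 h)
    have : insert n B ⊆ Finset.range n := (Finset.mem_powersetCard.1 hA).1
    exact Finset.notMem_range_self (this (Finset.mem_insert_self n B))
  rw [Finset.sum_union hdisj]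
  have hS1 : (∑ A ∈ Finset.powersetCard (k+1) (Finset.range n),
      (∏ j ∈ A, pR j) * ∏ j ∈ insert n (Finset.range n) \ A, (1 - pR j))
      = (1 - pR n) * ∑ A ∈ Finset.powersetCard (k+1) (Finset.range n),
        (∏ j ∈ A, pR j) * ∏ j ∈ Finset.range n \ A, (1 - pR j) := by
    rw [Finset.mul_sum]
    apply Finset.sum_congr rfl
    intro A hA
    have hAsub : A ⊆ Finset.range n := (Finset.mem_powersetCard.1 hA).1
    have hAn : n ∉ A := fun h => Finset.notMem_range_self (hAsub h)
    have hsd : insert n (Finset.range n) \ A = insert n (Finset.range n \ A) := by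
      ext c
      simp only [Finset.mem_sdiff, Finset.mem_insert]
      constructor
      · rintro ⟨hc | hc, hc2⟩
        · exact Or.inl hc
        · exact Or.inr ⟨hc, hc2⟩
      · rintro (rfl | ⟨hc, hc2⟩)
        · exact ⟨Or.inl rfl, hAn⟩
        · exact ⟨Or.inr hc, hc2⟩
    rw [hsd, Finset.prod_insert (fun h => Finset.notMem_range_self (Finset.mem_sdiff.1 h).1)]
    ring
  have hS2 : (∑ A ∈ (Finset.powersetCard k (Finset.range n)).image (insert n),
      (∏ j ∈ A, pR j) * ∏ j ∈ insert n (Finset.range n) \ A, (1 - pR j))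
      = pR n * ∑ A ∈ Finset.powersetCard k (Finset.range n),
        (∏ j ∈ A, pR j) * ∏ j ∈ Finset.range n \ A, (1 - pR j) := by
    rw [Finset.sum_image (fun A hA B hB h => by
      have hAn : n ∉ A := fun hc => Finset.notMem_range_self
        ((Finset.mem_powersetCard.1 hA).1 hc)
      have hBn : n ∉ B := fun hc => Finset.notMem_range_self
        ((Finset.mem_powersetCard.1 hB).1 hc)
      have := congrArg (fun S => Finset.erase S n) h
      simpa [Finset.erase_insert hAn, Finset.erase_insert hBn] using this)]
    rw [Finset.mul_sum]
    apply Finset.sum_congr rfl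
    intro A hA
    have hAsub : A ⊆ Finset.range n := (Finset.mem_powersetCard.1 hA).1
    have hAn : n ∉ A := fun h => Finset.notMem_range_self (hAsub h)
    have hsd : insert n (Finset.range n) \ insert n A = Finset.range n \ A := by
      ext c
      simp only [Finset.mem_sdiff, Finset.mem_insert]
      constructor
      · rintro ⟨hc | hc, hc2⟩
        · exact absurd (Or.inl hc) hc2
        · exact ⟨hc, fun h => hc2 (Or.inr h)⟩
      · rintro ⟨hc, hc2⟩
        refine ⟨Or.inr hc, ?_⟩
        rintro (rfl | h)
        · exact Finset.notMem_range_self hc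
        · exact hc2 h
    rw [hsd, Finset.prod_insert hAn]
    ring
  rw [hS1, hS2]
  ring

lemma Tc_pos (n : ℕ) : 0 < Tc n := by
  induction n with
  | zero => rw [Tc_zero]; norm_num
  | succ n ih => rw [Tc_succ]; positivity

/-- the distribution identity, `ℕ`-count version -/
lemma Fc_eq_Qd (n : ℕ) : ∀ k, (Fc n k : ℝ) = Qd n k * (Tc n : ℝ) := by
  induction n with
  | zero =>
    intro k
    cases k with
    | zero => rw [Fc_zero_zero, Qd_zero_zero, Tc_zero]; norm_num
    | succ k => rw [Fc_zero_succ, Qd_zero_succ]; norm_num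
  | succ n ih =>
    intro k
    have key : (1 - pR n) * (2 * (n : ℝ) + 1) = 2 * n := by
      have := pR_mul n
      nlinarith [this]
    cases k with
    | zero =>
      rw [Fc_succ_zero, Qd_succ_zero, Tc_succ]
      push_cast
      rw [ih 0]
      linear_combination (-(Qd n 0 * (Tc n : ℝ))) * key
    | succ k =>
      rw [Fc_succ_succ, Qd_succ_succ, Tc_succ]
      push_cast
      rw [ih k, ih (k+1)]
      have hp := pR_mul n
      linear_combination (-(Qd n k * (Tc n : ℝ))) * hp + (-(Qd n (k+1) * (Tc n : ℝ))) * key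

/-- the expectation identity, `ℕ`-count version -/
lemma Sc_eq (n : ℕ) : (Sc n : ℝ) = (∑ j ∈ Finset.range n, pR j) * (Tc n : ℝ) := by
  induction n with
  | zero => rw [Sc_zero]; simp
  | succ n ih =>
    rw [Sc_succ, Tc_succ, Finset.sum_range_succ]
    push_cast
    rw [ih]
    have hp := pR_mul n
    linear_combination (-(Tc n : ℝ)) * hp


-- ===================== chunk 8: assembly =====================

lemma orbCountDef_eq {d : ℕ} (σ τ : Equiv.Perm (Fin d)) : orbCount σ τ = orbCount' σ τ :=
  orbCount_eq σ τ

def prodSubSigma {A B : Type*} (Q : A → B → Prop) :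
    {pr : A × B // Q pr.1 pr.2} ≃ Σ a : A, {b // Q a b} where
  toFun := fun p => ⟨p.1.1, ⟨p.1.2, p.2⟩⟩
  invFun := fun x => ⟨(x.1, x.2.1), x.2.2⟩
  left_inv := fun _ => rfl
  right_inv := fun _ => rfl

def sigmaFPF (n : ℕ) : FPFInvolution (2 * n) :=
  ⟨sigma0 (2 * n) (even2n n), sigma0_sq _ _, sigma0_fpf _ _⟩

lemma card_pairs (n : ℕ) (k : ℕ) :
    Nat.card {pr : FPFInvolution (2*n) × FPFInvolution (2*n) //
        orbCount' pr.1.1 pr.2.1 = k} = Tc n * Fc n k := by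
  classical
  rw [Nat.card_congr (prodSubSigma (fun (σ τ : FPFInvolution (2*n)) =>
    orbCount' σ.1 τ.1 = k))]
  rw [Nat.card_eq_fintype_card, Fintype.card_sigma]
  have hfib : ∀ σ : FPFInvolution (2*n),
      Fintype.card {τ : FPFInvolution (2*n) // orbCount' σ.1 τ.1 = k} = Fc n k := by
    intro σ
    rw [← Nat.card_eq_fintype_card]
    exact (count_symm σ (sigmaFPF n) k).trans rfl
  rw [Finset.sum_congr rfl (fun σ _ => hfib σ), Finset.sum_const, Finset.card_univ,
    smul_eq_mul]
  congr 1
  rw [← Nat.card_eq_fintype_card]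
  rfl

lemma sum_pairs (n : ℕ) :
    (∑ pr : FPFInvolution (2*n) × FPFInvolution (2*n), orbCount' pr.1.1 pr.2.1)
      = Tc n * Sc n := by
  rw [Fintype.sum_prod_type]
  have hfib : ∀ σ : FPFInvolution (2*n),
      (∑ τ : FPFInvolution (2*n), orbCount' σ.1 τ.1) = Sc n := by
    intro σ
    exact (sum_symm σ (sigmaFPF n)).trans rfl
  rw [Finset.sum_congr rfl (fun σ _ => hfib σ), Finset.sum_const, Finset.card_univ,
    smul_eq_mul]
  congr 1
  rw [← Nat.card_eq_fintype_card]
  rfl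

lemma Qd_fin (n k : ℕ) :
    (∑ A ∈ Finset.powersetCard k (Finset.univ : Finset (Fin n)),
      (∏ j ∈ A, (1 : ℝ) / (2 * (j : ℝ) + 1)) *
        ∏ j ∈ Aᶜ, (1 - 1 / (2 * (j : ℝ) + 1))) = Qd n k := by
  classical
  unfold Qd
  have hrange : Finset.range n
      = Finset.map Fin.valEmbedding (Finset.univ : Finset (Fin n)) := by
    rw [Fin.map_valEmbedding_univ]
    ext c
    simp
  rw [hrange, Finset.powersetCard_map, Finset.sum_map]
  apply Finset.sum_congr rfl
  intro A _
  have hme : ∀ B : Finset (Fin n),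
      (Finset.mapEmbedding Fin.valEmbedding).toEmbedding B = B.map Fin.valEmbedding :=
    fun B => rfl
  simp only [hme]
  have hsd : Finset.map Fin.valEmbedding (Finset.univ : Finset (Fin n)) \
      Finset.map Fin.valEmbedding A = Finset.map Fin.valEmbedding Aᶜ := by
    ext c
    simp only [Finset.mem_sdiff, Finset.mem_map, Finset.mem_univ, true_and,
      Finset.mem_compl, Fin.valEmbedding_apply]
    constructor
    · rintro ⟨⟨j, rfl⟩, h2⟩
      exact ⟨j, fun hj => h2 ⟨j, hj, rfl⟩, rfl⟩
    · rintro ⟨j, hj, rfl⟩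
      refine ⟨⟨j, rfl⟩, ?_⟩
      rintro ⟨i, hi, hic⟩
      exact hj (by rw [← Fin.val_injective hic]; exact hi)
  rw [hsd, Finset.prod_map, Finset.prod_map]
  simp only [Fin.valEmbedding_apply, pR]

lemma main_distribution (n k : ℕ) :
    (Nat.card {pr : FPFInvolution (2*n) × FPFInvolution (2*n) //
        orbCount' pr.1.1 pr.2.1 = k} : ℝ) /
        (Nat.card (FPFInvolution (2*n) × FPFInvolution (2*n)) : ℝ)
      = Qd n k := by
  have hTpos : (0:ℝ) < (Tc n : ℝ) := by exact_mod_cast Tc_pos n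
  have hnum : (Nat.card {pr : FPFInvolution (2*n) × FPFInvolution (2*n) //
      orbCount' pr.1.1 pr.2.1 = k} : ℝ) = (Tc n : ℝ) * (Fc n k : ℝ) := by
    exact_mod_cast congrArg (Nat.cast : ℕ → ℝ) (card_pairs n k)
  have hden : (Nat.card (FPFInvolution (2*n) × FPFInvolution (2*n)) : ℝ)
      = (Tc n : ℝ) * (Tc n : ℝ) := by
    rw [Nat.card_prod]
    push_cast
    rfl
  rw [hnum, hden, Fc_eq_Qd]
  field_simp

lemma main_expectation (n : ℕ) :
    (∑ pr : FPFInvolution (2*n) × FPFInvolution (2*n),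
        (orbCount' pr.1.1 pr.2.1 : ℝ)) /
        (Nat.card (FPFInvolution (2*n) × FPFInvolution (2*n)) : ℝ)
      = ∑ j ∈ Finset.range n, pR j := by
  have hTpos : (0:ℝ) < (Tc n : ℝ) := by exact_mod_cast Tc_pos n
  have hnum : (∑ pr : FPFInvolution (2*n) × FPFInvolution (2*n),
      (orbCount' pr.1.1 pr.2.1 : ℝ)) = (Tc n : ℝ) * (Sc n : ℝ) := by
    rw [← Nat.cast_sum]
    exact_mod_cast congrArg (Nat.cast : ℕ → ℝ) (sum_pairs n)
  have hden : (Nat.card (FPFInvolution (2*n) × FPFInvolution (2*n)) : ℝ)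
      = (Tc n : ℝ) * (Tc n : ℝ) := by
    rw [Nat.card_prod]
    push_cast
    rfl
  rw [hnum, hden, Sc_eq]
  field_simp

end OrbAux


open OrbAux in
/-- For a uniform random pair of fixed-point-free involutions on `d` letters (`d` even),
the number of orbits of the group they generate is distributed as the sum of independent
Bernoulli random variables with parameters `1/(2j-1)`, `j = 1, ..., d/2`; in particular
its expectation is `∑_{j=1}^{d/2} 1/(2j-1)`. -/
theorem orbit_count_distribution (d : ℕ) (hd : Even d) (hd2 : 2 ≤ d) :
    (∀ m : ℕ,
      (Nat.card {pr : FPFInvolution d × FPFInvolution d //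
          orbCount (pr.1.1) (pr.2.1) = m} : ℝ) /
          (Nat.card (FPFInvolution d × FPFInvolution d) : ℝ) =
        ∑ A ∈ Finset.powersetCard m (Finset.univ : Finset (Fin (d / 2))),
          (∏ j ∈ A, (1 : ℝ) / (2 * (j : ℝ) + 1)) *
            ∏ j ∈ Aᶜ, (1 - 1 / (2 * (j : ℝ) + 1))) ∧
    (∑' pr : FPFInvolution d × FPFInvolution d, (orbCount (pr.1.1) (pr.2.1) : ℝ)) /
        (Nat.card (FPFInvolution d × FPFInvolution d) : ℝ) =
      ∑ j : Fin (d / 2), (1 : ℝ) / (2 * (j : ℝ) + 1) := by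
  classical
  obtain ⟨n, hn⟩ : ∃ n, d = 2 * n := ⟨d / 2, by have := Nat.even_iff.mp hd; omega⟩
  subst hn
  have hn2 : 2 * n / 2 = n := by omega
  rw [hn2]
  constructor
  · intro k
    have e : {pr : FPFInvolution (2*n) × FPFInvolution (2*n) //
          orbCount pr.1.1 pr.2.1 = k} ≃
        {pr : FPFInvolution (2*n) × FPFInvolution (2*n) //
          orbCount' pr.1.1 pr.2.1 = k} :=
      Equiv.subtypeEquiv (Equiv.refl _) (fun pr => by rw [Equiv.refl_apply, orbCountDef_eq])
    rw [Nat.card_congr e, main_distribution n k, ← Qd_fin n k]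
  · rw [tsum_fintype]
    have : ∀ pr : FPFInvolution (2*n) × FPFInvolution (2*n),
        ((orbCount pr.1.1 pr.2.1 : ℕ) : ℝ) = ((orbCount' pr.1.1 pr.2.1 : ℕ) : ℝ) := by
      intro pr
      rw [orbCountDef_eq]
    rw [Finset.sum_congr rfl (fun pr _ => this pr), main_expectation n]
    rw [Fin.sum_univ_eq_sum_range (fun j => (1 : ℝ) / (2 * (j : ℝ) + 1)) n]
    rfl
end
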